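/- Let n = p + q ≥ 3 and w ∈ ℝ. Let P : ℝⁿ × ℝⁿ → ℝ, (x,p) ↦ P(x,p), be polynomial in p with coefficients smooth in x, and suppose that for every conformal Killing vector field X of the flat metric η on ℝⁿ one has Σᵢ Xⁱ(x) ∂_{xⁱ}P − Σ_{i,j} (∂_{xⁱ}X^j)(x) p_j ∂_{pᵢ}P + w (Σ_k ∂_k X^k)(x) P = 0 identically. Then: if w = 2s/n for some s ∈ ℕ, there is a constant c ∈ ℝ with P(x,p) = c (Σᵢ η_{ii} pᵢ²)^s for all (x,p); and if w is not of the form 2s/n with s ∈ ℕ, then P = 0. (Classification of the scalar conformal invariants: the powers R^s of the energy R = η^{ij} pᵢ p_j.) -/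

import Mathlib

/-!
Only the affine conformal Killing fields are needed. Translations make `P` independent of `x`,
so `P(x, ·)` is a fixed polynomial `φ`; the dilation `X = x` gives Euler's identity
`∑ pᵢ ∂ᵢφ = w n φ`, so every monomial of `φ` has degree `w n`; the pseudo-rotations give
`ηᵢ pᵢ ∂ⱼφ = ηⱼ pⱼ ∂ᵢφ`. Contracting this identity with `ηⱼ ∂ⱼ` and then with `pᵢ` yields
`R Δφ = (n + d - 2) d φ` for `φ` homogeneous of degree `d`, where `Δφ` is again rotation
invariant, of degree `d - 2`. As `n ≥ 2` the constant vanishes only for `d = 0`, and induction on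
`d` gives `φ = c Rᵈᐟ²`, with `φ = 0` when `d` is odd.
-/

open Matrix BigOperators

noncomputable section

/-- The partial derivative `∂_j f (x)` of a function on `ℝⁿ`. -/
def pd {n : ℕ} (f : (Fin n → ℝ) → ℝ) (j : Fin n) (x : Fin n → ℝ) : ℝ :=
  fderiv ℝ f x (Pi.single j 1)

/-- Entries of the flat diagonal metric `η = diag(1,…,1,−1,…,−1)` with `p` entries `+1`. -/
def etaSign (p : ℕ) {n : ℕ} (i : Fin n) : ℝ := if (i : ℕ) < p then 1 else -1

/-- The divergence `Σ_k ∂_k X^k` of a vector field on `ℝⁿ`. -/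
def divg {n : ℕ} (X : (Fin n → ℝ) → Fin n → ℝ) (x : Fin n → ℝ) : ℝ :=
  ∑ k, pd (fun y => X y k) k x

/-- `X` is a conformal Killing vector field for the flat metric of signature `(p, n−p)`:
`∂ᵢX_j + ∂_jXᵢ = (2/n)(Σ_k ∂_k X^k) η_{ij}` where `X_j = η_{jj} X^j`. -/
def ConformalKilling (p : ℕ) {n : ℕ} (X : (Fin n → ℝ) → Fin n → ℝ) : Prop :=
  ∀ (x : Fin n → ℝ) (i j : Fin n),
    etaSign p j * pd (fun y => X y j) i x + etaSign p i * pd (fun y => X y i) j x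
      = (2 / (n : ℝ)) * divg X x * (if i = j then etaSign p i else 0)

/-- The Lie bracket of vector fields `[X,Y]ⁱ = Σ_j (X^j ∂_j Yⁱ − Y^j ∂_j Xⁱ)`. -/
def lieBracketVF {n : ℕ} (X Y : (Fin n → ℝ) → Fin n → ℝ) : (Fin n → ℝ) → Fin n → ℝ :=
  fun x i => ∑ j, (X x j * pd (fun y => Y y i) j x - Y x j * pd (fun y => X y i) j x)

/-- `P(x,p)` is polynomial in the fiber variable `p` with coefficients smooth in `x`. -/
def PolyInP {n : ℕ} (P : (Fin n → ℝ) → (Fin n → ℝ) → ℝ) : Prop :=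
  ∃ (D : ℕ) (c : (Fin n → Fin (D + 1)) → (Fin n → ℝ) → ℝ),
    (∀ α, ContDiff ℝ (⊤ : ℕ∞) (c α)) ∧
    ∀ x pv, P x pv = ∑ α : Fin n → Fin (D + 1), c α x * ∏ i, pv i ^ (α i : ℕ)

namespace MvPolynomial

section CommRing

variable {σ R : Type*} [CommRing R]

theorem pderiv_comm (i j : σ) (φ : MvPolynomial σ R) :
    pderiv i (pderiv j φ) = pderiv j (pderiv i φ) := by
  classical
  have h : ⁅pderiv i, pderiv j⁆ = (0 : Derivation R (MvPolynomial σ R) (MvPolynomial σ R)) :=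
    derivation_ext fun k => by
      rw [Derivation.commutator_apply]
      simp [pderiv_X, Pi.single_apply, apply_ite]
  have := congr($h φ)
  rwa [Derivation.commutator_apply, Derivation.zero_apply, sub_eq_zero] at this

theorem IsHomogeneous.pderiv_eq_zero {φ : MvPolynomial σ R} (h : φ.IsHomogeneous 0) (i : σ) :
    pderiv i φ = 0 := by
  rw [totalDegree_eq_zero_iff_eq_C.1 (Nat.le_zero.1 h.totalDegree_le), pderiv_C]

variable [Fintype σ]

theorem coeff_sum_X_mul_pderiv (φ : MvPolynomial σ R) (m : σ →₀ ℕ) :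
    coeff m (∑ i, X i * pderiv i φ) = m.degree * coeff m φ := by
  classical
  induction φ using MvPolynomial.induction_on' with
  | monomial s r =>
    simp only [X_mul_pderiv_monomial, ← Finset.sum_smul, ← Finsupp.degree_eq_sum]
    rw [coeff_smul, coeff_monomial, nsmul_eq_mul]
    split_ifs with h <;> simp [h]
  | add f g hf hg => simp [mul_add, Finset.sum_add_distrib, coeff_add, hf, hg]

theorem sum_X_mul_pderiv_pderiv {φ : MvPolynomial σ R} {d : ℕ} (h : φ.IsHomogeneous d) (i : σ) :
    ∑ j, X j * pderiv j (pderiv i φ) = C ((d : R) - 1) * pderiv i φ := by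
  classical
  have := congr(pderiv i $(h.sum_X_mul_pderiv))
  simp only [map_sum, pderiv_mul, pderiv_X, Pi.single_apply, Finset.sum_add_distrib, ite_mul,
    one_mul, zero_mul, Finset.sum_ite_eq', Finset.mem_univ, if_true, map_nsmul] at this
  simp only [pderiv_comm i] at this
  rw [map_sub, map_natCast, map_one, sub_mul, one_mul, ← nsmul_eq_mul, ← this]
  ring

variable (a : σ → R)

def diagLaplacian (φ : MvPolynomial σ R) : MvPolynomial σ R :=
  ∑ k, C (a k) * pderiv k (pderiv k φ)

def diagQuadratic : MvPolynomial σ R :=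
  ∑ i, C (a i) * X i ^ 2

/-- `φ` is annihilated by the infinitesimal rotations `xᵢ ∂ⱼ - xⱼ ∂ᵢ` of the metric `diag a`,
where `xᵢ = aᵢ Xᵢ` is the lowered coordinate. -/
def IsRotationInvariant (φ : MvPolynomial σ R) : Prop :=
  ∀ i j, C (a i) * X i * pderiv j φ = C (a j) * X j * pderiv i φ

variable {a}

theorem pderiv_diagLaplacian (j : σ) (φ : MvPolynomial σ R) :
    pderiv j (diagLaplacian a φ) = diagLaplacian a (pderiv j φ) := by
  simp only [diagLaplacian, map_sum, pderiv_C_mul, pderiv_comm j]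

theorem diagLaplacian_C_mul (c : R) (φ : MvPolynomial σ R) :
    diagLaplacian a (C c * φ) = C c * diagLaplacian a φ := by
  simp only [diagLaplacian, pderiv_C_mul, Finset.mul_sum]
  exact Finset.sum_congr rfl fun _ _ => by ring

theorem diagLaplacian_X_mul (i : σ) (φ : MvPolynomial σ R) :
    diagLaplacian a (X i * φ) = C (2 * a i) * pderiv i φ + X i * diagLaplacian a φ := by
  classical
  simp only [diagLaplacian, pderiv_mul, pderiv_X, Pi.single_apply, map_add, Finset.mul_sum]
  simp only [apply_ite, Derivation.map_one_eq_zero, map_zero, ite_self, zero_mul, ite_mul,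
    one_mul, zero_add, add_zero, mul_add, mul_zero, Finset.sum_add_distrib, Finset.sum_ite_eq,
    Finset.mem_univ, if_true, C_mul]
  simp only [map_ofNat, mul_left_comm (C _) (X i)]
  ring

protected theorem IsHomogeneous.diagLaplacian {φ : MvPolynomial σ R} {d : ℕ}
    (h : φ.IsHomogeneous (d + 2)) : (diagLaplacian a φ).IsHomogeneous d :=
  IsHomogeneous.sum _ _ _ fun k _ => (h.pderiv.pderiv (i := k)).C_mul _

protected theorem IsHomogeneous.diagLaplacian_eq_zero {φ : MvPolynomial σ R}
    (h : φ.IsHomogeneous 1) : diagLaplacian a φ = 0 :=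
  Finset.sum_eq_zero fun k _ => by rw [h.pderiv.pderiv_eq_zero, mul_zero]

protected theorem IsRotationInvariant.diagLaplacian (ha : ∀ i, a i * a i = 1)
    {φ : MvPolynomial σ R} (h : IsRotationInvariant a φ) :
    IsRotationInvariant a (diagLaplacian a φ) := by
  intro i j
  have h2 : ∀ k, C (a k) * C (2 * a k) = (2 : MvPolynomial σ R) := fun k => by
    rw [← map_mul, mul_left_comm, ha, mul_one, map_ofNat]
  have := congr(MvPolynomial.diagLaplacian a $(h i j))
  simp only [mul_assoc, diagLaplacian_C_mul, diagLaplacian_X_mul, ← pderiv_diagLaplacian] at this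
  rw [pderiv_comm j i φ] at this
  linear_combination this - pderiv i (pderiv j φ) * h2 i + pderiv i (pderiv j φ) * h2 j

theorem IsRotationInvariant.C_mul_X_mul_diagLaplacian (ha : ∀ i, a i * a i = 1)
    {φ : MvPolynomial σ R} {d : ℕ} (hφ : φ.IsHomogeneous d) (h : IsRotationInvariant a φ)
    (i : σ) :
    C (a i) * X i * diagLaplacian a φ = C ((Fintype.card σ : R) + d - 2) * pderiv i φ := by
  classical
  have hC : ∀ k, C (a k) * C (a k) = (1 : MvPolynomial σ R) := fun k => by
    rw [← map_mul, ha, map_one]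
  have lhs : ∑ j, C (a j) * pderiv j (C (a i) * X i * pderiv j φ)
      = pderiv i φ + C (a i) * X i * diagLaplacian a φ := by
    have hterm : ∀ j, C (a j) * (C (a i) * X i * pderiv j (pderiv j φ))
        = C (a i) * X i * (C (a j) * pderiv j (pderiv j φ)) := fun j => by ring
    simp only [Derivation.leibniz, smul_eq_mul, pderiv_X, Pi.single_apply, mul_ite, mul_one,
      mul_zero, derivation_C, add_zero, mul_add, hterm, Finset.sum_add_distrib, ← Finset.mul_sum,
      Finset.sum_ite_eq, Finset.mem_univ, if_true, diagLaplacian]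
    linear_combination pderiv i φ * hC i
  have rhs : ∑ j, C (a j) * pderiv j (C (a j) * X j * pderiv i φ)
      = C ((Fintype.card σ : R) + d - 1) * pderiv i φ := by
    have hterm : ∀ j, C (a j) * (C (a j) * X j * pderiv j (pderiv i φ))
        = X j * pderiv j (pderiv i φ) := fun j => by
      linear_combination X j * pderiv j (pderiv i φ) * hC j
    have hconst : ∀ j, C (a j) * (pderiv i φ * C (a j)) = pderiv i φ := fun j => by
      linear_combination pderiv i φ * hC j
    simp only [Derivation.leibniz, smul_eq_mul, pderiv_X, Pi.single_eq_same, mul_one,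
      derivation_C, mul_zero, add_zero, mul_add, hterm, hconst, Finset.sum_add_distrib,
      sum_X_mul_pderiv_pderiv hφ, C_sub, map_natCast, C_1, Finset.sum_const, Finset.card_univ,
      nsmul_eq_mul, C_add]
    ring
  have := Finset.sum_congr rfl fun j (_ : j ∈ Finset.univ) =>
    congrArg (C (a j) * pderiv j ·) (h i j)
  rw [lhs, rhs] at this
  simp only [map_sub, map_add, map_natCast, map_one, map_ofNat] at this ⊢
  linear_combination this

theorem IsRotationInvariant.diagQuadratic_mul_diagLaplacian (ha : ∀ i, a i * a i = 1)
    {φ : MvPolynomial σ R} {d : ℕ} (hφ : φ.IsHomogeneous d) (h : IsRotationInvariant a φ) :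
    diagQuadratic a * diagLaplacian a φ = C (((Fintype.card σ : R) + d - 2) * d) * φ := by
  have hterm : ∀ i, C (a i) * X i ^ 2 * diagLaplacian a φ
      = C ((Fintype.card σ : R) + d - 2) * (X i * pderiv i φ) := fun i => by
    linear_combination X i * h.C_mul_X_mul_diagLaplacian ha hφ i
  rw [diagQuadratic, Finset.sum_mul, Finset.sum_congr rfl fun i _ => hterm i, ← Finset.mul_sum,
    hφ.sum_X_mul_pderiv, nsmul_eq_mul, ← map_natCast C, ← mul_assoc, ← map_mul]

end CommRing

section Field

variable {σ K : Type*} [Field K] [Fintype σ] {a : σ → K}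

theorem natCast_degree_eq_of_sum_X_mul_pderiv_eq {φ : MvPolynomial σ K} {c : K}
    (hE : ∑ i, X i * pderiv i φ = C c * φ) {m : σ →₀ ℕ} (hm : coeff m φ ≠ 0) :
    (m.degree : K) = c := by
  have := congr(coeff m $hE)
  rw [coeff_sum_X_mul_pderiv, coeff_C_mul] at this
  exact mul_right_cancel₀ hm this

theorem isHomogeneous_of_sum_X_mul_pderiv_eq [CharZero K] {φ : MvPolynomial σ K} {d : ℕ}
    (hE : ∑ i, X i * pderiv i φ = C (d : K) * φ) : φ.IsHomogeneous d := fun m hm => by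
  have hdeg : m.degree = d := by
    exact_mod_cast natCast_degree_eq_of_sum_X_mul_pderiv_eq hE hm
  rwa [Finsupp.degree_eq_weight_one, ← Pi.one_def] at hdeg

theorem IsRotationInvariant.eq_C_inv_mul_diagQuadratic_mul_diagLaplacian
    [CharZero K] (hσ : 2 ≤ Fintype.card σ) (ha : ∀ i, a i * a i = 1)
    {φ : MvPolynomial σ K} {d : ℕ} (hφ : φ.IsHomogeneous (d + 1)) (h : IsRotationInvariant a φ) :
    φ = C (((Fintype.card σ : K) + d - 1) * (d + 1))⁻¹ *
      (diagQuadratic a * diagLaplacian a φ) := by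
  have hκ : ((Fintype.card σ : K) + d - 1) * (d + 1) ≠ 0 := by
    have : ((Fintype.card σ : K) + d - 1) = ((Fintype.card σ - 1 + d : ℕ) : K) := by
      push_cast [Nat.cast_sub (by omega : 1 ≤ Fintype.card σ)]; ring
    rw [this]
    exact mul_ne_zero (by exact_mod_cast (by omega)) (by exact_mod_cast d.succ_ne_zero)
  rw [h.diagQuadratic_mul_diagLaplacian ha hφ, ← mul_assoc, ← map_mul]
  push_cast
  rw [show ((Fintype.card σ : K) + (d + 1) - 2) = (Fintype.card σ : K) + d - 1 by ring,
    inv_mul_cancel₀ hκ, map_one, one_mul]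

theorem IsRotationInvariant.eq_zero_of_isHomogeneous_odd [CharZero K] (hσ : 2 ≤ Fintype.card σ)
    (ha : ∀ i, a i * a i = 1) {s : ℕ} {φ : MvPolynomial σ K} (hφ : φ.IsHomogeneous (2 * s + 1))
    (h : IsRotationInvariant a φ) : φ = 0 := by
  induction s generalizing φ with
  | zero =>
    rw [h.eq_C_inv_mul_diagQuadratic_mul_diagLaplacian hσ ha hφ, hφ.diagLaplacian_eq_zero]
    simp only [mul_zero]
  | succ s ih =>
    rw [show 2 * (s + 1) + 1 = 2 * s + 1 + 2 by ring] at hφ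
    rw [h.eq_C_inv_mul_diagQuadratic_mul_diagLaplacian hσ ha hφ,
      ih hφ.diagLaplacian (h.diagLaplacian ha)]
    simp only [mul_zero]

theorem IsRotationInvariant.exists_eq_C_mul_diagQuadratic_pow [CharZero K]
    (hσ : 2 ≤ Fintype.card σ) (ha : ∀ i, a i * a i = 1) {s : ℕ} {φ : MvPolynomial σ K}
    (hφ : φ.IsHomogeneous (2 * s)) (h : IsRotationInvariant a φ) :
    ∃ c, φ = C c * diagQuadratic a ^ s := by
  induction s generalizing φ with
  | zero =>
    exact ⟨coeff 0 φ, by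
      rw [pow_zero, mul_one, ← totalDegree_eq_zero_iff_eq_C]
      exact Nat.le_zero.1 hφ.totalDegree_le⟩
  | succ s ih =>
    obtain ⟨c, hc⟩ := ih (φ := diagLaplacian a φ) hφ.diagLaplacian (h.diagLaplacian ha)
    rw [show 2 * (s + 1) = 2 * s + 1 + 1 by ring] at hφ
    obtain ⟨κ, hκ⟩ : ∃ κ, φ = C κ * (diagQuadratic a * diagLaplacian a φ) :=
      ⟨_, h.eq_C_inv_mul_diagQuadratic_mul_diagLaplacian hσ ha hφ⟩
    exact ⟨κ * c, by rw [hκ, hc, map_mul]; ring⟩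

theorem IsRotationInvariant.eq_C_mul_diagQuadratic_pow_of_sum_X_mul_pderiv_eq [CharZero K]
    (hσ : 2 ≤ Fintype.card σ) (ha : ∀ i, a i * a i = 1) {φ : MvPolynomial σ K} {c : K}
    (hE : ∑ i, X i * pderiv i φ = C c * φ) (h : IsRotationInvariant a φ) :
    (∀ s : ℕ, c = 2 * s → ∃ k, φ = C k * diagQuadratic a ^ s) ∧
      ((¬ ∃ s : ℕ, c = 2 * s) → φ = 0) := by
  refine ⟨fun s hc => ?_, fun hc => ?_⟩
  · refine h.exists_eq_C_mul_diagQuadratic_pow hσ ha (isHomogeneous_of_sum_X_mul_pderiv_eq ?_)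
    rwa [Nat.cast_mul, Nat.cast_ofNat, ← hc]
  · by_contra hφ
    obtain ⟨m, hm⟩ := ne_zero_iff.1 hφ
    have hdeg := natCast_degree_eq_of_sum_X_mul_pderiv_eq hE hm
    obtain ⟨s, hs | hs⟩ := Nat.even_or_odd' m.degree
    · exact hc ⟨s, by rw [← hdeg, hs, Nat.cast_mul, Nat.cast_ofNat]⟩
    · refine hφ (h.eq_zero_of_isHomogeneous_odd hσ ha (s := s)
        (isHomogeneous_of_sum_X_mul_pderiv_eq ?_))
      rwa [← hs, hdeg]

end Field

end MvPolynomial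

theorem etaSign_mul_self (p : ℕ) {n : ℕ} (i : Fin n) : etaSign p i * etaSign p i = 1 := by
  unfold etaSign
  split_ifs <;> norm_num

/-- `A` lies in the conformal algebra `co(p, q)`: `ηA + (ηA)ᵀ = (2/n) tr(A) η`, i.e. `y ↦ b + A y`
is a conformal Killing field. -/
def IsConformalMatrix (p : ℕ) {n : ℕ} (A : Matrix (Fin n) (Fin n) ℝ) : Prop :=
  ∀ i j, etaSign p j * A j i + etaSign p i * A i j
    = 2 / (n : ℝ) * A.trace * (if i = j then etaSign p i else 0)

section ConformalMatrix

variable {p n : ℕ}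

theorem isConformalMatrix_zero : IsConformalMatrix p (0 : Matrix (Fin n) (Fin n) ℝ) :=
  fun i j => by simp

theorem isConformalMatrix_one : IsConformalMatrix p (1 : Matrix (Fin n) (Fin n) ℝ) := by
  intro i j
  have : (n : ℝ) ≠ 0 := Nat.cast_ne_zero.2 i.pos.ne'
  rcases eq_or_ne i j with rfl | hij
  · simp only [Matrix.one_apply_eq, Matrix.trace_one, Fintype.card_fin, if_true]
    field_simp
    ring
  · simp [hij, Ne.symm hij]

theorem trace_single_sub_single {a b : Fin n} (hab : a ≠ b) (c d : ℝ) :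
    (Matrix.single a b c - Matrix.single b a d).trace = 0 := by
  rw [Matrix.trace_sub, Matrix.trace_single_eq_of_ne _ _ _ hab,
    Matrix.trace_single_eq_of_ne _ _ _ hab.symm, sub_zero]

theorem isConformalMatrix_single_sub_single {a b : Fin n} (hab : a ≠ b) :
    IsConformalMatrix p (Matrix.single a b (etaSign p a) - Matrix.single b a (etaSign p b)) := by
  intro i j
  rw [trace_single_sub_single hab, mul_zero, zero_mul]
  simp only [Matrix.sub_apply, Matrix.single_apply]
  split_ifs <;> grind [etaSign_mul_self]

end ConformalMatrix

section Calculus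

variable {n : ℕ}

theorem HasFDerivAt.pd_eq {f : (Fin n → ℝ) → ℝ} {f' : (Fin n → ℝ) →L[ℝ] ℝ}
    {x : Fin n → ℝ} (h : HasFDerivAt f f' x) (j : Fin n) : pd f j x = f' (Pi.single j 1) := by
  rw [pd, h.fderiv]

theorem pd_affine (b : Fin n → ℝ) (A : Matrix (Fin n) (Fin n) ℝ) (i j : Fin n)
    (x : Fin n → ℝ) : pd (fun y => (b + A *ᵥ y) j) i x = A j i := by
  let L : (Fin n → ℝ) →L[ℝ] ℝ :=
    (ContinuousLinearMap.proj j).comp (LinearMap.toContinuousLinearMap (Matrix.mulVecLin A))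
  have h : HasFDerivAt (fun y => (b + A *ᵥ y) j) L x := (L.hasFDerivAt.const_add (b j))
  rw [h.pd_eq]
  simp [L]

theorem contDiff_affine (b : Fin n → ℝ) (A : Matrix (Fin n) (Fin n) ℝ) :
    ContDiff ℝ (⊤ : ℕ∞) (fun y => b + A *ᵥ y) :=
  contDiff_const.add (LinearMap.toContinuousLinearMap (Matrix.mulVecLin A)).contDiff

theorem divg_affine (b : Fin n → ℝ) (A : Matrix (Fin n) (Fin n) ℝ) (x : Fin n → ℝ) :
    divg (fun y => b + A *ᵥ y) x = A.trace := by
  simp only [divg, pd_affine, Matrix.trace, Matrix.diag]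

theorem conformalKilling_affine {p : ℕ} (b : Fin n → ℝ) {A : Matrix (Fin n) (Fin n) ℝ}
    (hA : IsConformalMatrix p A) :
    ConformalKilling p (fun y => b + A *ᵥ y) := by
  intro x i j
  simp only [pd_affine, divg_affine]
  exact hA i j

theorem hasFDerivAt_mvPolynomial_eval (φ : MvPolynomial (Fin n) ℝ) (v : Fin n → ℝ) :
    HasFDerivAt (fun u => MvPolynomial.eval u φ)
      (∑ i, MvPolynomial.eval v (MvPolynomial.pderiv i φ) •
        (ContinuousLinearMap.proj i : (Fin n → ℝ) →L[ℝ] ℝ)) v := by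
  induction φ using MvPolynomial.induction_on with
  | C c => simpa using hasFDerivAt_const c v
  | add f g hf hg =>
    simp only [map_add, add_smul, Finset.sum_add_distrib]
    exact hf.add hg
  | mul_X f i hf =>
    simp only [map_mul, MvPolynomial.eval_X]
    refine (hf.mul (hasFDerivAt_apply i v)).congr_fderiv ?_
    ext h
    simp [MvPolynomial.pderiv_X, Pi.single_apply, Finset.sum_add_distrib, add_mul,
      Finset.mul_sum, apply_ite (MvPolynomial.eval v), mul_assoc]

theorem pd_mvPolynomial_eval (φ : MvPolynomial (Fin n) ℝ) (i : Fin n) (v : Fin n → ℝ) :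
    pd (fun u => MvPolynomial.eval u φ) i v = MvPolynomial.eval v (MvPolynomial.pderiv i φ) := by
  simp [(hasFDerivAt_mvPolynomial_eval φ v).pd_eq, Pi.single_apply]

theorem eq_of_forall_pd_eq_zero {f : (Fin n → ℝ) → ℝ} (hf : Differentiable ℝ f)
    (h : ∀ k x, pd f k x = 0) (x y : Fin n → ℝ) : f x = f y := by
  refine is_const_of_fderiv_eq_zero hf (fun z => ?_) x y
  refine ContinuousLinearMap.coe_injective (LinearMap.pi_ext fun k c => ?_)
  have hk := h k z
  rw [pd] at hk
  rw [← mul_one c, ← smul_eq_mul, Pi.single_smul', map_smul]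
  simp [hk]

end Calculus

namespace PolyInP

variable {n : ℕ} {P : (Fin n → ℝ) → (Fin n → ℝ) → ℝ}

theorem differentiable (hP : PolyInP P) (pv : Fin n → ℝ) :
    Differentiable ℝ (fun x => P x pv) := by
  obtain ⟨D, c, hc, hrep⟩ := hP
  simp only [hrep]
  exact Differentiable.fun_sum fun α _ => ((hc α).differentiable (by simp)).mul_const _

theorem exists_eval_eq (hP : PolyInP P) (x : Fin n → ℝ) :
    ∃ φ : MvPolynomial (Fin n) ℝ, ∀ pv, P x pv = MvPolynomial.eval pv φ := by
  obtain ⟨D, c, -, hrep⟩ := hP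
  exact ⟨∑ α : Fin n → Fin (D + 1), MvPolynomial.C (c α x) * ∏ i, MvPolynomial.X i ^ (α i : ℕ),
    fun pv => by simp [hrep]⟩

end PolyInP

def IsConformallyInvariant (p : ℕ) {n : ℕ} (w : ℝ) (P : (Fin n → ℝ) → (Fin n → ℝ) → ℝ) : Prop :=
  ∀ X : (Fin n → ℝ) → Fin n → ℝ, ContDiff ℝ (⊤ : ℕ∞) X → ConformalKilling p X →
    ∀ x pv : Fin n → ℝ,
      (∑ i, X x i * pd (fun y => P y pv) i x)
      - (∑ i, ∑ j, pd (fun y => X y j) i x * pv j * pd (fun u => P x u) i pv)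
      + w * divg X x * P x pv = 0

namespace IsConformallyInvariant

open MvPolynomial

variable {p n : ℕ} {w : ℝ} {P : (Fin n → ℝ) → (Fin n → ℝ) → ℝ}

theorem affine (hinv : IsConformallyInvariant p w P) (b : Fin n → ℝ)
    {A : Matrix (Fin n) (Fin n) ℝ} (hA : IsConformalMatrix p A) (x pv : Fin n → ℝ) :
    (∑ i, (b + A *ᵥ x) i * pd (fun y => P y pv) i x)
      - (∑ i, ∑ j, A j i * pv j * pd (fun u => P x u) i pv) + w * A.trace * P x pv = 0 := by
  simpa only [pd_affine, divg_affine] using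
    hinv _ (contDiff_affine b A) (conformalKilling_affine b hA) x pv

theorem pd_base_eq_zero (hinv : IsConformallyInvariant p w P) (k : Fin n) (x pv : Fin n → ℝ) :
    pd (fun y => P y pv) k x = 0 := by
  simpa [Pi.single_apply] using hinv.affine (Pi.single k 1) isConformalMatrix_zero x pv

theorem exists_eval_eq (hinv : IsConformallyInvariant p w P) (hP : PolyInP P) :
    ∃ φ : MvPolynomial (Fin n) ℝ, ∀ x pv, P x pv = eval pv φ := by
  obtain ⟨φ, hφ⟩ := hP.exists_eval_eq 0
  refine ⟨φ, fun x pv => ?_⟩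
  rw [← hφ]
  exact eq_of_forall_pd_eq_zero (hP.differentiable pv)
    (fun k y => hinv.pd_base_eq_zero k y pv) x 0

theorem sum_C_mul_X_mul_pderiv (hinv : IsConformallyInvariant p w P)
    {φ : MvPolynomial (Fin n) ℝ} (hφ : ∀ x pv, P x pv = eval pv φ) {A : Matrix (Fin n) (Fin n) ℝ}
    (hA : IsConformalMatrix p A) :
    ∑ i, ∑ j, C (A j i) * X j * pderiv i φ = C (w * A.trace) * φ := by
  refine funext fun pv => ?_
  have := hinv.affine 0 hA 0 pv
  simp only [hinv.pd_base_eq_zero, mul_zero, Finset.sum_const_zero, zero_sub] at this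
  simp only [hφ, pd_mvPolynomial_eval] at this
  simp only [map_sum, map_mul, eval_C, eval_X]
  linarith

theorem sum_X_mul_pderiv (hinv : IsConformallyInvariant p w P) {φ : MvPolynomial (Fin n) ℝ}
    (hφ : ∀ x pv, P x pv = eval pv φ) :
    ∑ i, X i * pderiv i φ = C (w * n) * φ := by
  simpa [Matrix.one_apply] using hinv.sum_C_mul_X_mul_pderiv hφ isConformalMatrix_one

theorem isRotationInvariant (hinv : IsConformallyInvariant p w P) {φ : MvPolynomial (Fin n) ℝ}
    (hφ : ∀ x pv, P x pv = eval pv φ) : IsRotationInvariant (etaSign p) φ := by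
  intro a b
  rcases eq_or_ne a b with rfl | hab
  · rfl
  have := hinv.sum_C_mul_X_mul_pderiv hφ (isConformalMatrix_single_sub_single hab)
  rw [trace_single_sub_single hab, mul_zero, map_zero, zero_mul] at this
  simp only [Matrix.sub_apply, Matrix.single_apply, ite_and, C_sub, apply_ite C, C_0, sub_mul,
    ite_mul, zero_mul, Finset.sum_sub_distrib, Finset.sum_ite_eq, Finset.mem_univ, if_true] at this
  rwa [sub_eq_zero] at this

end IsConformallyInvariant

/-- classification of scalar conformal invariants of the symbol module of
weight `w` on `T*ℝⁿ`, `n = p + q ≥ 3`. If a symbol `P(x,p)`, polynomial in `p` with smooth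
coefficients, is annihilated by the natural action
`Σᵢ Xⁱ ∂_{xⁱ}P − Σ_{i,j} (∂_{xⁱ}X^j) p_j ∂_{pᵢ}P + w (div X) P` of every conformal Killing
field `X`, then `P = c·R^s` with `R = η^{ij}pᵢp_j` when `w = 2s/n`, and `P = 0` otherwise. -/
theorem scalar_conformal_invariants (p q : ℕ) (hn : 3 ≤ p + q) (w : ℝ)
    (P : (Fin (p + q) → ℝ) → (Fin (p + q) → ℝ) → ℝ) (hP : PolyInP P)
    (hinv : ∀ X : (Fin (p + q) → ℝ) → Fin (p + q) → ℝ,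
      ContDiff ℝ (⊤ : ℕ∞) X → ConformalKilling p X →
      ∀ x pv : Fin (p + q) → ℝ,
        (∑ i, X x i * pd (fun y => P y pv) i x)
        - (∑ i, ∑ j, pd (fun y => X y j) i x * pv j * pd (fun u => P x u) i pv)
        + w * divg X x * P x pv = 0) :
    (∀ s : ℕ, w = 2 * s / (p + q : ℝ) →
      ∃ c : ℝ, ∀ x pv, P x pv = c * (∑ i, etaSign p i * pv i ^ 2) ^ s) ∧
    ((¬ ∃ s : ℕ, w = 2 * s / (p + q : ℝ)) → ∀ x pv, P x pv = 0) := by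
  have hinv : IsConformallyInvariant p w P := hinv
  obtain ⟨φ, hφ⟩ := hinv.exists_eval_eq hP
  obtain ⟨heven, hodd⟩ :=
    (hinv.isRotationInvariant hφ).eq_C_mul_diagQuadratic_pow_of_sum_X_mul_pderiv_eq
      (by rw [Fintype.card_fin]; omega) (etaSign_mul_self p) (hinv.sum_X_mul_pderiv hφ)
  have hw : ∀ s : ℕ, w = 2 * s / (p + q : ℝ) ↔ w * ((p + q : ℕ) : ℝ) = 2 * s := fun s => by
    have : ((p + q : ℕ) : ℝ) ≠ 0 := Nat.cast_ne_zero.2 (by omega)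
    push_cast at this ⊢
    rw [eq_div_iff this]
  refine ⟨fun s hs => ?_, fun hns x pv => ?_⟩
  · obtain ⟨c, hc⟩ := heven s ((hw s).1 hs)
    exact ⟨c, fun x pv => by simp [hφ, hc, MvPolynomial.diagQuadratic]⟩
  · rw [hφ, hodd fun ⟨s, hs⟩ => hns ⟨s, (hw s).2 hs⟩, map_zero]
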